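/- arXiv:1706.01127 — 2 statements merged into one kernel-verified Lean document; each statement's English description precedes it below -/
import Mathlib

section
/- Let D be an N×N symmetric positive definite matrix, H an N×N matrix of rank N, B an N×k matrix of rank k, and B⊥ an (N−k)×N matrix of rank N−k with B⊥ B = 0. Let H_top be an arbitrary k×N matrix (the constraint Jacobian ∂h/∂q). If the k×k matrix H_top D⁻¹ B is invertible, then the N×N stacked matrix [H_top; B⊥ D] has rank N. -/
open Matrix

/-- If the decoupling matrix `Htop D⁻¹ B` is invertible, then the stacked
`N×N` matrix `[Htop; B⊥ D]` has rank `N`. -/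
theorem stmt_2 (N k : ℕ) (hk1 : 1 ≤ k) (hkN : k ≤ N)
    (D : Matrix (Fin N) (Fin N) ℝ) (hD : D.PosDef)
    (H : Matrix (Fin N) (Fin N) ℝ) (hH : H.rank = N)
    (B : Matrix (Fin N) (Fin k) ℝ) (hB : B.rank = k)
    (Bperp : Matrix (Fin (N - k)) (Fin N) ℝ) (hBperp : Bperp.rank = N - k)
    (hannih : Bperp * B = 0)
    (Htop : Matrix (Fin k) (Fin N) ℝ)
    (hdec : IsUnit (Htop * D⁻¹ * B)) :
    (Matrix.fromRows Htop (Bperp * D)).rank = N := by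
  have hDdet : IsUnit D.det := isUnit_iff_ne_zero.mpr (ne_of_gt hD.det_pos)
  have hdecdet : IsUnit (Htop * D⁻¹ * B).det :=
    (Matrix.isUnit_iff_isUnit_det _).mp hdec
  -- range of B equals kernel of Bperp
  have hle : LinearMap.range B.mulVecLin ≤ LinearMap.ker Bperp.mulVecLin := by
    rintro y ⟨u, rfl⟩
    simp [Matrix.mulVecLin_apply, Matrix.mulVec_mulVec, hannih]
  have hkerB : Module.finrank ℝ (LinearMap.ker Bperp.mulVecLin) = k := by
    have h1 := LinearMap.finrank_range_add_finrank_ker Bperp.mulVecLin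
    have h2 : Module.finrank ℝ ↥(LinearMap.range Bperp.mulVecLin) = N - k := hBperp
    have h3 : Module.finrank ℝ (Fin N → ℝ) = N := by simp
    omega
  have hrangeB : Module.finrank ℝ ↥(LinearMap.range B.mulVecLin) = k := hB
  have heq : LinearMap.range B.mulVecLin = LinearMap.ker Bperp.mulVecLin :=
    Submodule.eq_of_le_of_finrank_le hle (by rw [hkerB, hrangeB])
  -- injectivity of the stacked matrix
  have hinj : Function.Injective (Matrix.fromRows Htop (Bperp * D)).mulVecLin := by
    rw [← LinearMap.ker_eq_bot, LinearMap.ker_eq_bot']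
    intro x hx
    simp only [Matrix.mulVecLin_apply, Matrix.fromRows_mulVec] at hx
    have hx1 : Htop *ᵥ x = 0 := funext fun i => congrFun hx (Sum.inl i)
    have hx2 : (Bperp * D) *ᵥ x = 0 := funext fun i => congrFun hx (Sum.inr i)
    have hmem : D *ᵥ x ∈ LinearMap.range B.mulVecLin := by
      rw [heq]
      simpa [Matrix.mulVecLin_apply, ← Matrix.mulVec_mulVec] using hx2
    obtain ⟨u, hu⟩ := hmem
    simp only [Matrix.mulVecLin_apply] at hu
    have hxval : x = D⁻¹ *ᵥ (B *ᵥ u) := by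
      rw [hu, Matrix.mulVec_mulVec, Matrix.nonsing_inv_mul D hDdet, Matrix.one_mulVec]
    have hu0 : (Htop * D⁻¹ * B) *ᵥ u = 0 := by
      rw [← Matrix.mulVec_mulVec, ← Matrix.mulVec_mulVec, ← hxval, hx1]
    have : u = 0 := by
      have := congrArg (fun v => (Htop * D⁻¹ * B)⁻¹ *ᵥ v) hu0
      simpa [Matrix.mulVec_mulVec, Matrix.nonsing_inv_mul _ hdecdet] using this
    rw [hxval, this]
    simp
  -- conclude
  have : (Matrix.fromRows Htop (Bperp * D)).rank
      = Module.finrank ℝ (Fin N → ℝ) := by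
    rw [Matrix.rank, LinearMap.finrank_range_of_inj hinj]
  simpa using this
end

section
/- Let ρ(ζ) = δ²ζ − V on the domain D = {ζ > 0 : δ²ζ − V_max > 0} with 0 < δ² < 1, V_max ≥ max(V, 0), and assume the stability condition (δ²/(1−δ²))V + V_max < 0 holds. Then for every ζ₀ ∈ D, the iterates ζ_{k+1} = ρ(ζ_k) remain in D for all k and converge to ζ* = −V/(1−δ²) with |ζ_k − ζ*| = δ^{2k}|ζ₀ − ζ*|. -/
/-- For `ρ(ζ) = δ²ζ − V` on `D = {ζ > 0 : δ²ζ − V_max > 0}` with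
`0 < δ² < 1`, `V_max ≥ max(V, 0)`, and the stability condition
`(δ²/(1−δ²))V + V_max < 0`, every trajectory starting in `D` stays in `D` and converges
geometrically to `ζ* = −V/(1−δ²)` with `|ζ_k − ζ*| = δ^{2k}|ζ₀ − ζ*|`. -/
theorem stmt_19 (δ V Vmax : ℝ) (hδ0 : 0 < δ ^ 2) (hδ1 : δ ^ 2 < 1)
    (hVmax : Vmax ≥ max V 0)
    (hstab : δ ^ 2 / (1 - δ ^ 2) * V + Vmax < 0)
    (ρ : ℝ → ℝ) (hρ : ∀ ζ, ρ ζ = δ ^ 2 * ζ - V)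
    (D : Set ℝ) (hD : D = {ζ : ℝ | 0 < ζ ∧ 0 < δ ^ 2 * ζ - Vmax})
    (ζstar : ℝ) (hζstar : ζstar = -V / (1 - δ ^ 2)) :
    ∀ ζ₀ ∈ D,
      (∀ k : ℕ, ρ^[k] ζ₀ ∈ D) ∧
      (∀ k : ℕ, |ρ^[k] ζ₀ - ζstar| = (δ ^ 2) ^ k * |ζ₀ - ζstar|) ∧
      Filter.Tendsto (fun k => ρ^[k] ζ₀) Filter.atTop (nhds ζstar) := by
  intro ζ₀ hζ₀
  have h1 : 0 < 1 - δ ^ 2 := by linarith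
  have hVmaxV : V ≤ Vmax := le_trans (le_max_left _ _) hVmax
  have hVmax0 : (0 : ℝ) ≤ Vmax := le_trans (le_max_right _ _) hVmax
  have hkey : δ ^ 2 * V + (1 - δ ^ 2) * Vmax < 0 := by
    have he : δ ^ 2 / (1 - δ ^ 2) * V * (1 - δ ^ 2) = δ ^ 2 * V := by
      field_simp
    nlinarith [mul_neg_of_neg_of_pos hstab h1]
  have hinv : ∀ ζ ∈ D, ρ ζ ∈ D := by
    intro ζ hζ
    rw [hD] at hζ ⊢
    obtain ⟨ha, hb⟩ := hζ
    rw [hρ]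
    refine ⟨by nlinarith, ?_⟩
    nlinarith [mul_pos hδ0 hb]
  have hmem : ∀ k, ρ^[k] ζ₀ ∈ D := by
    intro k
    induction k with
    | zero => simpa using hζ₀
    | succ n ih => rw [Function.iterate_succ_apply']; exact hinv _ ih
  have herr : ∀ k, |ρ^[k] ζ₀ - ζstar| = (δ ^ 2) ^ k * |ζ₀ - ζstar| := by
    intro k
    induction k with
    | zero => simp
    | succ n ih =>
      rw [Function.iterate_succ_apply', hρ]
      have hrw : δ ^ 2 * ρ^[n] ζ₀ - V - ζstar = δ ^ 2 * (ρ^[n] ζ₀ - ζstar) := by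
        rw [hζstar]; field_simp; ring
      rw [hrw, abs_mul, abs_of_pos hδ0, ih, pow_succ]; ring
  refine ⟨hmem, herr, ?_⟩
  have habs : Filter.Tendsto (fun k : ℕ => |ρ^[k] ζ₀ - ζstar|) Filter.atTop (nhds 0) := by
    simp_rw [herr]
    simpa using (tendsto_pow_atTop_nhds_zero_of_lt_one hδ0.le hδ1).mul_const |ζ₀ - ζstar|
  have hdiff : Filter.Tendsto (fun k : ℕ => ρ^[k] ζ₀ - ζstar) Filter.atTop (nhds 0) := by
    exact (tendsto_zero_iff_abs_tendsto_zero _).mpr habs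
  have := hdiff.add_const ζstar
  simpa using this
end
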